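/- arXiv:2603.09628 — 4 statements merged into one kernel-verified Lean document; each statement's English description precedes it below -/
import Mathlib

section
/- Let W be a matrix A_p weight on R^d (with 1<p<∞) and A any constant invertible n×n matrix. Then the matrix function 𝒲(x) = (A* W(x)^{2/p} A)^{p/2} is also a matrix A_p weight and [𝒲]_{A_p} = [W]_{A_p}. -/
open MeasureTheory Matrix
open scoped ENNReal ComplexOrder

/-- Operator norm of a matrix acting on Euclidean space. -/
noncomputable def opN {n : ℕ} (A : Matrix (Fin n) (Fin n) ℂ) : ℝ :=
  ‖Matrix.toEuclideanCLM (𝕜 := ℂ) A‖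

/-- Real power of a (Hermitian) matrix, via the continuous functional calculus. -/
noncomputable def mpow {n : ℕ} (A : Matrix (Fin n) (Fin n) ℂ) (r : ℝ) :
    Matrix (Fin n) (Fin n) ℂ :=
  cfc (fun t : ℝ => t ^ r) A

/-- The axis-parallel cube with corner `a` and side length `h`. -/
def cube {d : ℕ} (a : Fin d → ℝ) (h : ℝ) : Set (Fin d → ℝ) :=
  Set.univ.pi fun i => Set.Icc (a i) (a i + h)

/-- The (two-weight) matrix `A_p` characteristic
`[U,V]_{A_p} = sup_Q ⨍_Q (⨍_Q ‖U^{1/p}(x) V^{-1/p}(y)‖^{p'} dy)^{p/p'} dx`;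
with `U = V` it is the usual matrix `A_p` characteristic `[U]_{A_p}`. -/
noncomputable def ap2Const (d n : ℕ) (p : ℝ)
    (U V : (Fin d → ℝ) → Matrix (Fin n) (Fin n) ℂ) : ℝ≥0∞ :=
  ⨆ (a : Fin d → ℝ) (h : ℝ) (_ : 0 < h),
    ENNReal.ofReal (⨍ x in cube a h,
      (⨍ y in cube a h,
        opN (mpow (U x) (1 / p) * mpow (V y) (-(1 / p))) ^ (p / (p - 1))) ^
          (p / (p / (p - 1))))

/-!
The operator-norm quantity inside `[W]_{A_p}` is unchanged pointwise. With `B = W(x)^{2/p}`,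
`C = W(y)^{2/p}`, `T = Aᴴ B A`, `S = Aᴴ C A`, one has `𝒲(x)^{1/p} = T^{1/2}` and
`𝒲(y)^{-1/p} = S^{-1/2}`, and the C*-identity `‖X‖² = ‖Xᴴ X‖ = ‖X Xᴴ‖` gives
`‖T^{1/2} S^{-1/2}‖ = ‖B^{1/2} A S^{-1/2}‖ = ‖B^{1/2} C^{-1/2}‖`, because
`S^{-1/2} T S^{-1/2} = (B^{1/2} A S^{-1/2})ᴴ (B^{1/2} A S^{-1/2})` and `A S⁻¹ Aᴴ = C⁻¹`.
-/

open scoped Matrix.Norms.L2Operator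

section MatrixPower

variable {n : ℕ} {P : Matrix (Fin n) (Fin n) ℂ}

lemma isHermitian_mpow (P : Matrix (Fin n) (Fin n) ℂ) (r : ℝ) : (mpow P r).IsHermitian :=
  cfc_predicate _ _

namespace Matrix.PosDef

lemma pos_of_mem_spectrum (hP : P.PosDef) {t : ℝ} (ht : t ∈ spectrum ℝ P) : 0 < t := by
  rw [hP.isHermitian.spectrum_real_eq_range_eigenvalues] at ht
  obtain ⟨i, rfl⟩ := ht
  exact hP.eigenvalues_pos i

lemma continuousOn_rpow_spectrum (hP : P.PosDef) (r : ℝ) :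
    ContinuousOn (fun t : ℝ => t ^ r) (spectrum ℝ P) :=
  continuousOn_id.rpow_const fun _ ht => Or.inl (hP.pos_of_mem_spectrum ht).ne'

end Matrix.PosDef

lemma mpow_add (hP : P.PosDef) (r s : ℝ) : mpow P (r + s) = mpow P r * mpow P s := by
  rw [mpow, cfc_congr fun t ht => Real.rpow_add (hP.pos_of_mem_spectrum ht) r s,
    cfc_mul _ _ P (hP.continuousOn_rpow_spectrum r) (hP.continuousOn_rpow_spectrum s)]
  rfl

lemma mpow_zero (hP : P.PosDef) : mpow P 0 = 1 := by
  rw [mpow, cfc_congr (g := fun _ : ℝ => 1) fun t _ => Real.rpow_zero t]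
  exact cfc_const_one ℝ P hP.isHermitian

lemma mpow_one (hP : P.PosDef) : mpow P 1 = P := by
  rw [mpow, cfc_congr (g := id) fun t _ => Real.rpow_one t]
  exact cfc_id ℝ P hP.isHermitian

lemma mpow_mul_mpow_neg (hP : P.PosDef) (r : ℝ) : mpow P r * mpow P (-r) = 1 := by
  rw [← mpow_add hP, add_neg_cancel, mpow_zero hP]

lemma isUnit_mpow (hP : P.PosDef) (r : ℝ) : IsUnit (mpow P r) :=
  (Matrix.isUnit_iff_isUnit_det _).mpr
    (Matrix.isUnit_det_of_right_inverse (mpow_mul_mpow_neg hP r))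

lemma mpow_neg_one (hP : P.PosDef) : mpow P (-1) = P⁻¹ := by
  have h := mpow_mul_mpow_neg hP 1
  rw [mpow_one hP] at h
  exact (Matrix.inv_eq_right_inv h).symm

lemma mpow_half_mul_mpow_half (hP : P.PosDef) : mpow P (1 / 2) * mpow P (1 / 2) = P := by
  rw [← mpow_add hP]
  norm_num [mpow_one hP]

lemma mpow_neg_half_mul_mpow_neg_half (hP : P.PosDef) :
    mpow P (-(1 / 2)) * mpow P (-(1 / 2)) = P⁻¹ := by
  rw [← mpow_add hP]
  norm_num [mpow_neg_one hP]

lemma mpow_mpow (hP : P.PosDef) {r s t : ℝ} (hrs : r * s = t) :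
    mpow (mpow P r) s = mpow P t := by
  have hpos : ∀ u ∈ (fun t : ℝ => t ^ r) '' spectrum ℝ P, 0 < u := by
    rintro _ ⟨u, hu, rfl⟩
    exact Real.rpow_pos_of_pos (hP.pos_of_mem_spectrum hu) r
  rw [mpow, mpow, ← cfc_comp (fun t : ℝ => t ^ s) (fun t : ℝ => t ^ r) P
      hP.isHermitian.isSelfAdjoint (continuousOn_id.rpow_const fun u hu => Or.inl (hpos u hu).ne')
      (hP.continuousOn_rpow_spectrum r), mpow, ← hrs]
  exact cfc_congr fun u hu => (Real.rpow_mul (hP.pos_of_mem_spectrum hu).le r s).symm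

-- `P ^ r = (P ^ (r/2))ᴴ * 1 * P ^ (r/2)` is a congruence of the identity.
lemma Matrix.PosDef.mpow (hP : P.PosDef) (r : ℝ) : (_root_.mpow P r).PosDef := by
  have h := Matrix.PosDef.one.conjTranspose_mul_mul_same
    (Matrix.mulVec_injective_iff_isUnit.mpr (isUnit_mpow hP (r / 2)))
  rwa [Matrix.mul_one, (isHermitian_mpow P _).eq, ← mpow_add hP, add_halves] at h

end MatrixPower

section OperatorNorm

variable {n : ℕ} {X Y : Matrix (Fin n) (Fin n) ℂ}

lemma opN_eq_of_conjTranspose_mul_self_eq (h : Xᴴ * X = Yᴴ * Y) : opN X = opN Y := by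
  have hsq : opN X * opN X = opN Y * opN Y := by
    simp only [opN, Matrix.l2_opNorm_toEuclideanCLM, ← Matrix.l2_opNorm_conjTranspose_mul_self, h]
  exact (mul_self_inj (norm_nonneg _) (norm_nonneg _)).mp hsq

lemma opN_eq_of_mul_conjTranspose_self_eq (h : X * Xᴴ = Y * Yᴴ) : opN X = opN Y := by
  have hstar : opN Xᴴ = opN Yᴴ :=
    opN_eq_of_conjTranspose_mul_self_eq (by simpa only [Matrix.conjTranspose_conjTranspose])
  simpa only [opN, Matrix.l2_opNorm_toEuclideanCLM, Matrix.l2_opNorm_conjTranspose] using hstar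

end OperatorNorm

variable {n : ℕ}

lemma opN_mpow_half_mul_mpow_neg_half_conj {A B C : Matrix (Fin n) (Fin n) ℂ}
    (hB : B.PosDef) (hC : C.PosDef) (hA : IsUnit A) :
    opN (mpow (Aᴴ * B * A) (1 / 2) * mpow (Aᴴ * C * A) (-(1 / 2))) =
      opN (mpow B (1 / 2) * mpow C (-(1 / 2))) := by
  have hAinj := Matrix.mulVec_injective_iff_isUnit.mpr hA
  have hAdet := (Matrix.isUnit_iff_isUnit_det A).mp hA
  have hAHdet : IsUnit Aᴴ.det := by rw [Matrix.det_conjTranspose]; exact hAdet.star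
  set T := Aᴴ * B * A
  set S := Aᴴ * C * A with hS_def
  have hS_inv : A * S⁻¹ * Aᴴ = C⁻¹ := by
    rw [hS_def, Matrix.mul_inv_rev, Matrix.mul_inv_rev, ← Matrix.mul_assoc, ← Matrix.mul_assoc,
      Matrix.mul_nonsing_inv A hAdet, Matrix.one_mul, Matrix.mul_assoc,
      Matrix.nonsing_inv_mul Aᴴ hAHdet, Matrix.mul_one]
  have hT_sq :
      mpow T (1 / 2) * mpow T (1 / 2) = Aᴴ * (mpow B (1 / 2) * mpow B (1 / 2)) * A := by
    rw [mpow_half_mul_mpow_half (hB.conjTranspose_mul_mul_same hAinj),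
      mpow_half_mul_mpow_half hB]
  have hS_sq : A * (mpow S (-(1 / 2)) * mpow S (-(1 / 2))) * Aᴴ =
      mpow C (-(1 / 2)) * mpow C (-(1 / 2)) := by
    rw [mpow_neg_half_mul_mpow_neg_half (hC.conjTranspose_mul_mul_same hAinj),
      mpow_neg_half_mul_mpow_neg_half hC, hS_inv]
  set b := mpow B (1 / 2)
  set c := mpow C (-(1 / 2))
  set t := mpow T (1 / 2)
  set s := mpow S (-(1 / 2))
  have hb : bᴴ = b := (isHermitian_mpow _ _).eq
  have hc : cᴴ = c := (isHermitian_mpow _ _).eq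
  have ht : tᴴ = t := (isHermitian_mpow _ _).eq
  have hs : sᴴ = s := (isHermitian_mpow _ _).eq
  calc opN (t * s) = opN (b * A * s) := by
        refine opN_eq_of_conjTranspose_mul_self_eq ?_
        simp only [Matrix.conjTranspose_mul, hb, ht, hs]
        calc _ = s * (t * t) * s := by simp only [Matrix.mul_assoc]
          _ = _ := by rw [hT_sq]; simp only [Matrix.mul_assoc]
    _ = opN (b * c) := by
        refine opN_eq_of_mul_conjTranspose_self_eq ?_
        simp only [Matrix.conjTranspose_mul, hb, hc, hs]
        calc _ = b * (A * (s * s) * Aᴴ) * b := by simp only [Matrix.mul_assoc]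
          _ = _ := by rw [hS_sq]; simp only [Matrix.mul_assoc]

lemma opN_mpow_mul_mpow_neg_conj {p : ℝ} (hp : p ≠ 0)
    {A Wx Wy : Matrix (Fin n) (Fin n) ℂ} (hA : IsUnit A) (hWx : Wx.PosDef) (hWy : Wy.PosDef) :
    opN (mpow (mpow (Aᴴ * mpow Wx (2 / p) * A) (p / 2)) (1 / p) *
        mpow (mpow (Aᴴ * mpow Wy (2 / p) * A) (p / 2)) (-(1 / p))) =
      opN (mpow Wx (1 / p) * mpow Wy (-(1 / p))) := by
  have hAinj := Matrix.mulVec_injective_iff_isUnit.mpr hA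
  have hBx := hWx.mpow (2 / p)
  have hBy := hWy.mpow (2 / p)
  have e₁ : p / 2 * (1 / p) = 1 / 2 := by field_simp
  have e₂ : p / 2 * -(1 / p) = -(1 / 2) := by field_simp
  have e₃ : 2 / p * (1 / 2) = 1 / p := by field_simp
  have e₄ : 2 / p * -(1 / 2) = -(1 / p) := by field_simp
  rw [mpow_mpow (hBx.conjTranspose_mul_mul_same hAinj) e₁,
    mpow_mpow (hBy.conjTranspose_mul_mul_same hAinj) e₂, ← mpow_mpow hWx e₃, ← mpow_mpow hWy e₄]
  exact opN_mpow_half_mul_mpow_neg_half_conj hBx hBy hA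

lemma ap2Const_congr {d : ℕ} {p : ℝ} {U V U' V' : (Fin d → ℝ) → Matrix (Fin n) (Fin n) ℂ}
    (h : ∀ᵐ x, ∀ᵐ y, opN (mpow (U x) (1 / p) * mpow (V y) (-(1 / p))) =
      opN (mpow (U' x) (1 / p) * mpow (V' y) (-(1 / p)))) :
    ap2Const d n p U V = ap2Const d n p U' V' := by
  unfold ap2Const
  refine iSup_congr fun a => iSup_congr fun s => iSup_congr fun _ => ?_
  refine congrArg ENNReal.ofReal (average_congr ((ae_restrict_of_ae h).mono fun x hx => ?_))
  exact congrArg (· ^ _) (average_congr ((ae_restrict_of_ae hx).mono fun y hy =>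
    congrArg (· ^ _) hy))

theorem apConst_congr_invariant_general {d n : ℕ} {p : ℝ} (hp : 1 < p)
    (W : (Fin d → ℝ) → Matrix (Fin n) (Fin n) ℂ)
    (hW : ∀ᵐ x ∂(volume : Measure (Fin d → ℝ)), (W x).PosDef)
    (A : Matrix (Fin n) (Fin n) ℂ) (hA : IsUnit A) :
    (∀ᵐ x ∂(volume : Measure (Fin d → ℝ)),
        (mpow (Aᴴ * mpow (W x) (2 / p) * A) (p / 2)).PosDef) ∧
      ap2Const d n p (fun x => mpow (Aᴴ * mpow (W x) (2 / p) * A) (p / 2))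
          (fun x => mpow (Aᴴ * mpow (W x) (2 / p) * A) (p / 2)) =
        ap2Const d n p W W := by
  have hAinj := Matrix.mulVec_injective_iff_isUnit.mpr hA
  refine ⟨hW.mono fun x hx => ((hx.mpow _).conjTranspose_mul_mul_same hAinj).mpow _, ?_⟩
  exact ap2Const_congr (hW.mono fun x hx => hW.mono fun y hy =>
    opN_mpow_mul_mpow_neg_conj (by positivity) hA hx hy)

/-- If `W` is a matrix `A_p` weight on `ℝ^d` (`1 < p < ∞`) and `A` is a
constant invertible matrix, then `𝒲(x) = (Aᴴ W(x)^{2/p} A)^{p/2}` is also a matrix `A_p`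
weight and `[𝒲]_{A_p} = [W]_{A_p}`. -/
theorem apConst_congr_invariant {d n : ℕ} {p : ℝ} (hp : 1 < p)
    (W : (Fin d → ℝ) → Matrix (Fin n) (Fin n) ℂ)
    (hW : ∀ᵐ x ∂(volume : Measure (Fin d → ℝ)), (W x).PosDef)
    (hWAp : ap2Const d n p W W < ⊤)
    (A : Matrix (Fin n) (Fin n) ℂ) (hA : IsUnit A) :
    (∀ᵐ x ∂(volume : Measure (Fin d → ℝ)),
        (mpow (Aᴴ * mpow (W x) (2 / p) * A) (p / 2)).PosDef) ∧
      ap2Const d n p (fun x => mpow (Aᴴ * mpow (W x) (2 / p) * A) (p / 2))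
          (fun x => mpow (Aᴴ * mpow (W x) (2 / p) * A) (p / 2)) =
        ap2Const d n p W W :=
  apConst_congr_invariant_general hp W hW A hA
end

section
/- The key step in the proof that 𝒲 = (A* W^{2/p} A)^{p/2} has the same A_p characteristic as W: for a.e. x, y one has ‖𝒲^{1/p}(x) 𝒲^{-1/p}(y)‖ = ‖W^{1/p}(x) W^{-1/p}(y)‖. -/
open MeasureTheory Matrix
open scoped ENNReal ComplexOrder

/-!
Put `u = W(x)^{1/p} A` and `v = W(y)^{1/p} A`. Then `𝒲(x)^{1/p} = (u* u)^{1/2}` and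
`𝒲(y)^{-1/p} = (v* v)^{-1/2}`. By the C*-identity, `‖s z‖` depends on `s` only through `s* s`,
and `‖z t‖` on `t` only through `t t*`. Now `(u* u)^{1/2}` has the same `s* s` as `u`, and
`(v* v)^{-1/2}` the same `t t*` as `v⁻¹`, so the norm in question is
`‖u v⁻¹‖ = ‖W(x)^{1/p} W(y)^{-1/p}‖`, with no need for the unitary factor of the polar
decomposition.
-/

section CStarRing

variable {E : Type*} [NonUnitalNormedRing E] [StarRing E] [CStarRing E]

theorem norm_mul_eq_of_star_mul_self_eq {s m : E} (h : star s * s = star m * m) (x : E) :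
    ‖s * x‖ = ‖m * x‖ := by
  have expand (y : E) : star (y * x) * (y * x) = star x * (star y * y) * x := by
    simp only [star_mul, mul_assoc]
  have key : ‖s * x‖ * ‖s * x‖ = ‖m * x‖ * ‖m * x‖ := by
    rw [← CStarRing.norm_star_mul_self, ← CStarRing.norm_star_mul_self, expand, expand, h]
  exact (mul_self_inj (norm_nonneg _) (norm_nonneg _)).1 key

theorem norm_mul_eq_of_mul_star_self_eq {t r : E} (h : t * star t = r * star r) (x : E) :
    ‖x * t‖ = ‖x * r‖ := by
  rw [← norm_star, star_mul, norm_mul_eq_of_star_mul_self_eq (s := star t) (m := star r)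
    (by simpa only [star_star] using h), ← star_mul, norm_star]

end CStarRing

section CStarAlgebra

open CFC

variable {A : Type*} [CStarAlgebra A] [PartialOrder A] [StarOrderedRing A]

theorem star_rpow_half_mul_rpow_half (a : A) (ha : 0 ≤ a := by cfc_tac) :
    star (a ^ (1 / 2 : ℝ)) * a ^ (1 / 2 : ℝ) = a := by
  rw [← sqrt_eq_rpow, (sqrt_nonneg a).star_eq, sqrt_mul_sqrt_self a]

theorem rpow_neg_half_mul_star_rpow_neg_half (a : Aˣ) (ha : (0 : A) ≤ a := by cfc_tac) :
    (a : A) ^ (-(1 / 2) : ℝ) * star ((a : A) ^ (-(1 / 2) : ℝ)) = ↑a⁻¹ := by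
  rw [(rpow_nonneg (a := (a : A))).star_eq, ← rpow_add a.isUnit, ← rpow_neg_one_eq_inv a]
  norm_num

theorem norm_rpow_half_mul_rpow_neg_half (u v : Aˣ) :
    ‖(star (u : A) * u) ^ (1 / 2 : ℝ) * (star (v : A) * v) ^ (-(1 / 2) : ℝ)‖ =
      ‖((u * v⁻¹ : Aˣ) : A)‖ := by
  rw [norm_mul_eq_of_star_mul_self_eq (m := (u : A)) (star_rpow_half_mul_rpow_half _)]
  refine norm_mul_eq_of_mul_star_self_eq ?_ _
  have h := rpow_neg_half_mul_star_rpow_neg_half (star v * v) (by simp [star_mul_self_nonneg])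
  rwa [Units.val_mul, Units.coe_star, _root_.mul_inv_rev, Units.val_mul, Units.coe_star_inv] at h

theorem star_mul_self_rpow_mul (a c : A) (r : ℝ) (ha : IsStrictlyPositive a := by cfc_tac) :
    star (a ^ r * c) * (a ^ r * c) = star c * a ^ (r + r) * c := by
  rw [star_mul, (rpow_nonneg (a := a)).star_eq, rpow_add ha.isUnit]
  simp only [mul_assoc]

theorem rpow_rpow_of_star_mul_self (u : Aˣ) {x : ℝ} (y : ℝ) (hx : x ≠ 0) :
    ((star (u : A) * u) ^ x) ^ y = (star (u : A) * u) ^ (x * y) :=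
  rpow_rpow _ x y hx (CStarAlgebra.isStrictlyPositive_iff_eq_star_mul_self.mpr ⟨u, u.isUnit, rfl⟩)

theorem norm_conj_rpow_mul_conj_rpow_neg {a b : A} (ha : IsStrictlyPositive a)
    (hb : IsStrictlyPositive b) (c : Aˣ) {p : ℝ} (hp : p ≠ 0) :
    ‖((star (c : A) * a ^ (2 / p) * c) ^ (p / 2)) ^ (1 / p) *
        ((star (c : A) * b ^ (2 / p) * c) ^ (p / 2)) ^ (-(1 / p))‖ =
      ‖a ^ (1 / p) * b ^ (-(1 / p))‖ := by
  obtain ⟨x, hx⟩ := (IsStrictlyPositive.rpow a (1 / p) ha).isUnit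
  obtain ⟨y, hy⟩ := (IsStrictlyPositive.rpow b (1 / p) hb).isUnit
  have hconj (z : A) (w : Aˣ) (hw : (w : A) = z ^ (1 / p)) (hz : IsStrictlyPositive z) :
      star (c : A) * z ^ (2 / p) * c = star ((w * c : Aˣ) : A) * (w * c : Aˣ) := by
    rw [Units.val_mul, hw, star_mul_self_rpow_mul z c _ hz, ← add_div, one_add_one_eq_two]
  have hy_inv : ((y⁻¹ : Aˣ) : A) = b ^ (-(1 / p)) :=
    y.inv_eq_of_mul_eq_one_right (hy ▸ rpow_mul_rpow_neg (1 / p) hb)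
  have hp2 : p / 2 ≠ 0 := div_ne_zero hp two_ne_zero
  rw [hconj a x hx ha, hconj b y hy hb, rpow_rpow_of_star_mul_self _ _ hp2,
    rpow_rpow_of_star_mul_self _ _ hp2, show p / 2 * (1 / p) = 1 / 2 by field_simp,
    show p / 2 * -(1 / p) = -(1 / 2) by field_simp, norm_rpow_half_mul_rpow_neg_half,
    show x * c * (y * c)⁻¹ = x * y⁻¹ by group, Units.val_mul, hx, hy_inv]

end CStarAlgebra

section Matrix

open scoped Matrix.Norms.L2Operator MatrixOrder

variable {n : ℕ}

theorem opN_eq_norm (M : Matrix (Fin n) (Fin n) ℂ) : opN M = ‖M‖ := rfl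

theorem mpow_eq_rpow {M : Matrix (Fin n) (Fin n) ℂ} (hM : 0 ≤ M) (r : ℝ) : mpow M r = M ^ r :=
  (CFC.rpow_eq_cfc_real hM).symm

theorem mpow_mpow_conj_mpow_eq_rpow {W : Matrix (Fin n) (Fin n) ℂ} (hW : W.PosDef)
    (A : Matrix (Fin n) (Fin n) ℂ) (p r : ℝ) :
    mpow (mpow (Aᴴ * mpow W (2 / p) * A) (p / 2)) r =
      ((star A * W ^ (2 / p) * A) ^ (p / 2)) ^ r := by
  rw [mpow_eq_rpow hW.posSemidef.nonneg, ← star_eq_conjTranspose,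
    mpow_eq_rpow (star_left_conjugate_nonneg CFC.rpow_nonneg A), mpow_eq_rpow CFC.rpow_nonneg]

end Matrix

/-- The key step in proving that `𝒲 = (Aᴴ W^{2/p} A)^{p/2}` has the same
`A_p` characteristic as `W`: for a.e. `x, y`,
`‖𝒲^{1/p}(x) 𝒲^{-1/p}(y)‖ = ‖W^{1/p}(x) W^{-1/p}(y)‖`. -/
theorem key_norm_identity {d n : ℕ} {p : ℝ} (hp : 1 < p)
    (W : (Fin d → ℝ) → Matrix (Fin n) (Fin n) ℂ)
    (hW : ∀ᵐ x ∂(volume : Measure (Fin d → ℝ)), (W x).PosDef)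
    (A : Matrix (Fin n) (Fin n) ℂ) (hA : IsUnit A) :
    ∀ᵐ x ∂(volume : Measure (Fin d → ℝ)), ∀ᵐ y ∂(volume : Measure (Fin d → ℝ)),
      opN (mpow (mpow (Aᴴ * mpow (W x) (2 / p) * A) (p / 2)) (1 / p) *
            mpow (mpow (Aᴴ * mpow (W y) (2 / p) * A) (p / 2)) (-(1 / p))) =
        opN (mpow (W x) (1 / p) * mpow (W y) (-(1 / p))) := by
  open scoped Matrix.Norms.L2Operator MatrixOrder in
  filter_upwards [hW] with x hx
  filter_upwards [hW] with y hy
  rw [mpow_mpow_conj_mpow_eq_rpow hx, mpow_mpow_conj_mpow_eq_rpow hy,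
    mpow_eq_rpow hx.posSemidef.nonneg, mpow_eq_rpow hy.posSemidef.nonneg, opN_eq_norm,
    opN_eq_norm, ← hA.unit_spec]
  exact norm_conj_rpow_mul_conj_rpow_neg hx.isStrictlyPositive hy.isStrictlyPositive hA.unit
    (zero_lt_one.trans hp).ne'
end

section
/- Let θ be an increasingly ordered tuple of distinct natural numbers and α, β sub-tuples of θ (elements of C(θ)) with α strictly contained in the complement β^c = θ − β. Then for any matrices B_j ∈ M_n(F) indexed by the entries of θ, the alternating sum ∑_{σ: α ≤ σ ≤ β^c} (−1)^{|θ|−|α|−|β|−|σ|} B_{(σ−α)^t} B_{σ^c−β} equals the zero matrix, where for a tuple τ = (τ(1),...,τ(j)), B_τ = B_{τ(j)}···B_{τ(1)} is the product in reverse order, τ^t is τ reversed, σ^c = θ − σ, and the sum runs over all sub-tuples σ of θ with α ≤ σ ≤ β^c. -/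
open Finset

/-- For an increasingly ordered tuple (modelled by a finite set `s` of indices), the
reverse-ordered product `B⃗_s = B_{s(j)} ⋯ B_{s(1)}` (indices in decreasing order). -/
noncomputable def prodRev {n : ℕ} (B : ℕ → Matrix (Fin n) (Fin n) ℂ) (s : Finset ℕ) :
    Matrix (Fin n) (Fin n) ℂ :=
  (((s.sort (· ≤ ·)).reverse).map B).prod

/-- For a tuple `s`, the forward product `B⃗_{s^t} = B_{s(1)} ⋯ B_{s(j)}`
(indices in increasing order), i.e. the product associated to the reversed tuple. -/
noncomputable def prodFwd {n : ℕ} (B : ℕ → Matrix (Fin n) (Fin n) ℂ) (s : Finset ℕ) :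
    Matrix (Fin n) (Fin n) ℂ :=
  ((s.sort (· ≤ ·)).map B).prod


/-!
Let `m` be the largest element of `(θ \ β) \ α`, which exists because the inclusion
`α ⊂ θ \ β` is strict. Every `σ` in the range of summation with `m ∉ σ` pairs off with
`insert m σ`. All other indices of `σ \ α` and of `(θ \ σ) \ β` are smaller than `m`, so `B m`
is the last factor of `B_{(σ ∪ {m} − α)^t}` in the one term and the first factor of
`B_{σ^c − β}` in the other: both products equal `B_{(σ−α)^t} B_m B_{σ^c−β−{m}}`, while the
signs differ since the cardinalities of the two `σ` differ by one.
-/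

theorem Finset.sort_insert_of_forall_lt {α : Type*} [LinearOrder α] {s : Finset α} {m : α}
    (h : ∀ x ∈ s, x < m) : (insert m s).sort (· ≤ ·) = s.sort (· ≤ ·) ++ [m] := by
  have hm : m ∉ s := fun hms => lt_irrefl m (h m hms)
  have hnodup : (s.sort (· ≤ ·) ++ [m]).Nodup := by
    simp [List.nodup_append, hm, s.sort_nodup (· ≤ ·)]
  have hsorted : (s.sort (· ≤ ·) ++ [m]).Pairwise (· ≤ ·) := by
    simpa [List.pairwise_append, s.pairwise_sort (· ≤ ·)] using fun x hx => (h x hx).le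
  rw [← (List.toFinset_sort _ hnodup).2 hsorted]
  congr 1
  ext x
  simp

section

variable {n : ℕ} (B : ℕ → Matrix (Fin n) (Fin n) ℂ) {s : Finset ℕ} {m : ℕ}

theorem prodFwd_insert_of_forall_lt (h : ∀ x ∈ s, x < m) :
    prodFwd B (insert m s) = prodFwd B s * B m := by
  simp [prodFwd, sort_insert_of_forall_lt h]

theorem prodRev_insert_of_forall_lt (h : ∀ x ∈ s, x < m) :
    prodRev B (insert m s) = B m * prodRev B s := by
  simp [prodRev, sort_insert_of_forall_lt h]

end

theorem Finset.sum_Icc_eq_zero_of_add_insert {ι M : Type*} [DecidableEq ι] [AddCommMonoid M]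
    {s t : Finset ι} {a : ι} {f : Finset ι → M} (hst : s ⊆ t) (ha : a ∈ t \ s)
    (hf : ∀ u, s ⊆ u → u ⊆ t → a ∉ u → f u + f (insert a u) = 0) :
    ∑ u ∈ Icc s t, f u = 0 := by
  have hinj : Set.InjOn (s ∪ ·) (t \ s).powerset := fun u hu v hv huv => by
    simp only [coe_powerset, Set.mem_preimage, Set.mem_powerset_iff, coe_subset] at hu hv
    rw [← union_sdiff_cancel_left (disjoint_of_subset_right hu disjoint_sdiff),
      ← union_sdiff_cancel_left (disjoint_of_subset_right hv disjoint_sdiff)]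
    exact congrArg (· \ s) huv
  rw [Icc_eq_image_powerset hst, sum_image hinj, ← insert_erase ha,
    sum_powerset_insert (notMem_erase _ _), ← sum_add_distrib]
  refine sum_eq_zero fun u hu => ?_
  replace hu : u ⊆ (t \ s).erase a := mem_powerset.1 hu
  rw [union_insert]
  exact hf _ subset_union_left
    (union_subset hst (hu.trans ((erase_subset _ _).trans sdiff_subset)))
    (notMem_union.2 ⟨(mem_sdiff.1 ha).2, fun h => notMem_erase a _ (hu h)⟩)

theorem summand_add_summand_insert_eq_zero {n : ℕ} (B : ℕ → Matrix (Fin n) (Fin n) ℂ)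
    {θ α β σ : Finset ℕ} {m : ℕ} (hm : IsGreatest ((θ \ β) \ α : Finset ℕ) m)
    (hασ : α ⊆ σ) (hσ : σ ⊆ θ \ β) (hmσ : m ∉ σ) :
    ((-1 : ℂ) ^ ((θ.card : ℤ) - α.card - β.card - σ.card)) •
        (prodFwd B (σ \ α) * prodRev B ((θ \ σ) \ β)) +
      ((-1 : ℂ) ^ ((θ.card : ℤ) - α.card - β.card - (insert m σ).card)) •
        (prodFwd B (insert m σ \ α) * prodRev B ((θ \ insert m σ) \ β)) = 0 := by
  obtain ⟨hmem, hmax⟩ := hm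
  rw [mem_coe, mem_sdiff, mem_sdiff] at hmem
  have hlt : ∀ x ∈ (θ \ β) \ α, x ≠ m → x < m := fun x hx hxm => (hmax hx).lt_of_ne hxm
  have hlow : ∀ x ∈ σ \ α, x < m := fun x hx =>
    hlt x (sdiff_subset_sdiff hσ subset_rfl hx) (ne_of_mem_of_not_mem (mem_sdiff.1 hx).1 hmσ)
  have hhigh : ∀ x ∈ ((θ \ σ) \ β).erase m, x < m := by
    intro x hx
    simp only [mem_erase, mem_sdiff] at hx
    exact hlt x (mem_sdiff.2 ⟨mem_sdiff.2 ⟨hx.2.1.1, hx.2.2⟩, fun h => hx.2.1.2 (hασ h)⟩) hx.1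
  have hFwd : prodFwd B (insert m σ \ α) = prodFwd B (σ \ α) * B m := by
    rw [insert_sdiff_of_notMem _ hmem.2, prodFwd_insert_of_forall_lt B hlow]
  have hRev : prodRev B ((θ \ σ) \ β) = B m * prodRev B ((θ \ insert m σ) \ β) := by
    have hm_compl : m ∈ (θ \ σ) \ β := by simp [hmem.1.1, hmem.1.2, hmσ]
    rw [sdiff_insert, erase_sdiff_comm, ← prodRev_insert_of_forall_lt B hhigh,
      insert_erase hm_compl]
  have hsign : (-1 : ℂ) ^ ((θ.card : ℤ) - α.card - β.card - (insert m σ).card) =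
      -(-1 : ℂ) ^ ((θ.card : ℤ) - α.card - β.card - σ.card) := by
    rw [card_insert_of_notMem hmσ, Nat.cast_succ, ← sub_sub,
      zpow_sub_one₀ (by norm_num : (-1 : ℂ) ≠ 0), inv_neg_one, mul_neg_one]
  rw [hFwd, hRev, hsign, neg_smul, mul_assoc, add_neg_cancel]

theorem alternating_sum_vanishes_general {n : ℕ} (θ α β : Finset ℕ)
    (hstrict : α ⊂ θ \ β)
    (B : ℕ → Matrix (Fin n) (Fin n) ℂ) :
    ∑ σ ∈ θ.powerset.filter (fun σ => α ⊆ σ ∧ σ ⊆ θ \ β),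
      ((-1 : ℂ) ^ ((θ.card : ℤ) - α.card - β.card - σ.card)) •
        (prodFwd B (σ \ α) * prodRev B ((θ \ σ) \ β)) = 0 := by
  have hrange : θ.powerset.filter (fun σ => α ⊆ σ ∧ σ ⊆ θ \ β) = Icc α (θ \ β) := by
    ext σ
    simp only [mem_filter, mem_powerset, mem_Icc, and_iff_right_iff_imp, and_imp]
    exact fun _ hσ => hσ.trans sdiff_subset
  have hne : ((θ \ β) \ α).Nonempty := sdiff_nonempty.2 hstrict.not_subset
  rw [hrange]
  exact sum_Icc_eq_zero_of_add_insert hstrict.subset (max'_mem _ hne) fun σ hασ hσ hmσ =>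
    summand_add_summand_insert_eq_zero B (isGreatest_max' _ hne) hασ hσ hmσ

/-- For sub-tuples `α, β` of `θ` with `α` strictly contained in
`β^c = θ \ β`, the alternating sum
`∑_{α ≤ σ ≤ β^c} (−1)^{|θ|−|α|−|β|−|σ|} B_{(σ−α)^t} B_{σ^c−β}` vanishes. -/
theorem alternating_sum_vanishes {n : ℕ} (θ α β : Finset ℕ)
    (hα : α ⊆ θ) (hβ : β ⊆ θ) (hstrict : α ⊂ θ \ β)
    (B : ℕ → Matrix (Fin n) (Fin n) ℂ) :
    ∑ σ ∈ θ.powerset.filter (fun σ => α ⊆ σ ∧ σ ⊆ θ \ β),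
      ((-1 : ℂ) ^ ((θ.card : ℤ) - α.card - β.card - σ.card)) •
        (prodFwd B (σ \ α) * prodRev B ((θ \ σ) \ β)) = 0 :=
  alternating_sum_vanishes_general θ α β hstrict B
end

section
/- Mean-value decoupling of iterated commutator differences: for a tuple θ ∈ C(m), locally integrable matrices B₁,...,B_m, a linear operator T, and averages m_Q B⃗ of the matrices over a cube Q, one has (−1)^{|θ|} ∑_{σ ∈ C(θ)} (−1)^{|θ|−|σ|} B⃗_σ(x) (T⊗I_n)(B⃗_{(θ−σ)^t} f)(y) = ∑_{σ ∈ C(θ)} [∑_{α ∈ C(σ)} (−1)^{|θ|−|α|} B⃗_α(x)(m_Q B⃗)_{(σ−α)^t}] · (T⊗I_n)(∑_{β ∈ C(σ^c)} (−1)^{|θ|−|β|} (m_Q B⃗)_β B⃗_{(σ^c−β)^t} f)(y). -/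
/-
Write `(f ⋆ g)(s) = ∑_{u ⊆ s} f(u) g(s \ u)` for the subset convolution; it is associative.
With `N_s = (-1)^|s| B⃗_s(x)`, `P_s = (m_Q B⃗)_{s^t}`, `Q_s = (-1)^|s| (m_Q B⃗)_s` and
`t_s = (T ⊗ I_n)(B⃗_{s^t} f)(y)`, the left side is `(N ⋆ t)(θ)`, and, because `T ⊗ I_n` commutes
with constant matrices, the right side is `((N ⋆ P) ⋆ (Q ⋆ t))(θ) = (N ⋆ ((P ⋆ Q) ⋆ t))(θ)`.
Finally `P ⋆ Q = δ_∅`: for `R ≠ ∅` the terms of `∑_{U ⊆ R} P_U Q_{R \ U}` indexed by `U` and by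
`U ∪ {max R}` cancel, since `max R` stands last in `P` and first in `Q`.
-/

open Finset MeasureTheory

/-- `T ⊗ I_n`: the componentwise action of a scalar linear operator on vector functions. -/
def tensorI {X : Type*} {n : ℕ} (T : (X → ℂ) →ₗ[ℂ] (X → ℂ)) :
    (X → Fin n → ℂ) → (X → Fin n → ℂ) :=
  fun f x i => T (fun y => f y i) x

open scoped Matrix

theorem neg_one_pow_sub_of_le {R : Type*} [Monoid R] [HasDistribNeg R] {a b : ℕ} (h : b ≤ a) :
    (-1 : R) ^ (a - b) = (-1) ^ a * (-1) ^ b := by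
  obtain ⟨k, rfl⟩ := Nat.exists_eq_add_of_le h
  rw [Nat.add_sub_cancel_left, ← pow_add, show b + k + b = k + 2 * b by ring, pow_add, pow_mul,
    neg_one_sq, one_pow, mul_one]

theorem Finset.sort_insert_of_forall_le {α : Type*} [LinearOrder α] {s : Finset α} {a : α}
    (h : ∀ b ∈ s, b ≤ a) (ha : a ∉ s) :
    (insert a s).sort (· ≤ ·) = s.sort (· ≤ ·) ++ [a] := by
  have hnodup : (s.sort (· ≤ ·) ++ [a]).Nodup :=
    List.nodup_append.2 ⟨sort_nodup _ _, List.nodup_singleton a,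
      fun b hb c hc => by
        rw [List.mem_singleton.1 hc]; exact ne_of_mem_of_not_mem ((mem_sort _).1 hb) ha⟩
  have hsorted : (s.sort (· ≤ ·) ++ [a]).Pairwise (· ≤ ·) :=
    List.pairwise_append.2 ⟨pairwise_sort _ _, List.pairwise_singleton _ _,
      fun b hb c hc => by rw [List.mem_singleton.1 hc]; exact h b ((mem_sort _).1 hb)⟩
  have := (List.toFinset_sort (· ≤ ·) hnodup).2 hsorted
  rwa [List.toFinset_append, sort_toFinset, union_comm, List.toFinset_cons,
    List.toFinset_nil, insert_empty_eq, ← insert_eq] at this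

theorem sum_powerset_neg_one_pow_card_sub_smul {ι R V : Type*} [DecidableEq ι] [Ring R]
    [AddCommGroup V] [Module R V] {s θ : Finset ι} (hs : s ⊆ θ) (F : Finset ι → V) :
    ∑ u ∈ s.powerset, (-1 : R) ^ (θ.card - u.card) • F u =
      (-1 : R) ^ θ.card • ∑ u ∈ s.powerset, (-1 : R) ^ u.card • F u := by
  rw [smul_sum]
  refine sum_congr rfl fun u hu => ?_
  rw [neg_one_pow_sub_of_le (card_le_card ((mem_powerset.1 hu).trans hs)), mul_smul]

section SubsetConvolution

variable {ι A V : Type*} [DecidableEq ι]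

def subsetConv [SMul A V] [AddCommMonoid V] (f : Finset ι → A) (g : Finset ι → V)
    (s : Finset ι) : V :=
  ∑ t ∈ s.powerset, f t • g (s \ t)

theorem sum_powerset_sum_powerset_sdiff {M : Type*} [AddCommMonoid M] (s : Finset ι)
    (F : Finset ι → Finset ι → Finset ι → M) :
    ∑ t ∈ s.powerset, ∑ u ∈ t.powerset, F u (t \ u) (s \ t) =
      ∑ u ∈ s.powerset, ∑ v ∈ (s \ u).powerset, F u v ((s \ u) \ v) := by
  rw [sum_sigma', sum_sigma']
  refine sum_nbij' (fun p => ⟨p.2, p.1 \ p.2⟩) (fun q => ⟨q.1 ∪ q.2, q.1⟩) ?_ ?_ ?_ ?_ ?_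
  · rintro ⟨t, u⟩
    simp only [mem_sigma, mem_powerset, and_imp]
    exact fun ht hu => ⟨hu.trans ht, sdiff_subset_sdiff ht le_rfl⟩
  · rintro ⟨u, v⟩
    simp only [mem_sigma, mem_powerset, and_imp]
    exact fun hu hv => ⟨union_subset hu (hv.trans sdiff_subset), subset_union_left⟩
  · rintro ⟨t, u⟩
    simp only [mem_sigma, mem_powerset, and_imp]
    exact fun _ hu => by rw [union_sdiff_of_subset hu]
  · rintro ⟨u, v⟩
    simp only [mem_sigma, mem_powerset, and_imp]
    exact fun _ hv => by
      rw [union_sdiff_left, sdiff_eq_self_of_disjoint (disjoint_of_subset_left hv sdiff_disjoint)]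
  · rintro ⟨t, u⟩
    simp only [mem_sigma, mem_powerset, and_imp]
    exact fun _ hu => by rw [sdiff_sdiff_left, sup_eq_union, union_sdiff_of_subset hu]

theorem subsetConv_assoc [Semiring A] [AddCommMonoid V] [Module A V] (f g : Finset ι → A)
    (h : Finset ι → V) : subsetConv (subsetConv f g) h = subsetConv f (subsetConv g h) := by
  funext s
  simp only [subsetConv, sum_smul, smul_sum, smul_eq_mul, mul_smul]
  exact sum_powerset_sum_powerset_sdiff s fun u v w => f u • g v • h w

theorem single_empty_one_subsetConv [Semiring A] [AddCommMonoid V] [Module A V]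
    (h : Finset ι → V) : subsetConv (Pi.single ∅ (1 : A)) h = h := by
  funext s
  rw [subsetConv, sum_eq_single_of_mem ∅ (empty_mem_powerset s), Pi.single_eq_same, one_smul,
    sdiff_empty]
  intro t _ ht
  rw [Pi.single_eq_of_ne ht, zero_smul]

end SubsetConvolution

section MatrixProducts

variable {n : ℕ} (M : ℕ → Matrix (Fin n) (Fin n) ℂ)

@[simp] theorem prodFwd_empty : prodFwd M ∅ = 1 := by
  simp [prodFwd]

@[simp] theorem prodRev_empty : prodRev M ∅ = 1 := by
  simp [prodRev]

theorem prodFwd_insert_of_forall_le {s : Finset ℕ} {r : ℕ} (h : ∀ i ∈ s, i ≤ r) (hr : r ∉ s) :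
    prodFwd M (insert r s) = prodFwd M s * M r := by
  simp [prodFwd, sort_insert_of_forall_le h hr]

theorem prodRev_insert_of_forall_le {s : Finset ℕ} {r : ℕ} (h : ∀ i ∈ s, i ≤ r) (hr : r ∉ s) :
    prodRev M (insert r s) = M r * prodRev M s := by
  simp [prodRev, sort_insert_of_forall_le h hr]

theorem subsetConv_prodFwd_neg_one_pow_smul_prodRev :
    subsetConv (prodFwd M) (fun s => (-1 : ℂ) ^ s.card • prodRev M s) = Pi.single ∅ 1 := by
  funext R
  rcases R.eq_empty_or_nonempty with rfl | hR
  · simp [subsetConv]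
  rw [Pi.single_eq_of_ne hR.ne_empty]
  set r := R.max' hR
  have hr : r ∉ R.erase r := notMem_erase r R
  have hle : ∀ i ∈ R.erase r, i ≤ r := fun i hi => R.le_max' i (mem_of_mem_erase hi)
  rw [subsetConv, ← insert_erase (R.max'_mem hR), sum_powerset_insert hr, ← sum_add_distrib]
  refine sum_eq_zero fun U hU => ?_
  have hUr : r ∉ U := fun h => hr (mem_powerset.1 hU h)
  have hrU : r ∉ R.erase r \ U := fun h => hr (mem_sdiff.1 h).1
  rw [insert_sdiff_of_notMem _ hUr, insert_sdiff_insert, sdiff_insert_of_notMem hr,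
    card_insert_of_notMem hrU,
    prodRev_insert_of_forall_le M (fun i hi => hle i (mem_sdiff.1 hi).1) hrU,
    prodFwd_insert_of_forall_le M (fun i hi => hle i (mem_powerset.1 hU hi)) hUr, smul_eq_mul,
    smul_eq_mul, pow_succ, mul_neg_one, neg_smul, Matrix.mul_neg, Matrix.mul_smul,
    Matrix.mul_smul, mul_assoc, neg_add_cancel]

end MatrixProducts

section TensorI

variable {X : Type*} {n : ℕ} (T : (X → ℂ) →ₗ[ℂ] (X → ℂ))

theorem tensorI_sum {ι : Type*} (s : Finset ι) (g : ι → X → Fin n → ℂ) :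
    tensorI T (fun z => ∑ b ∈ s, g b z) = ∑ b ∈ s, tensorI T (g b) := by
  funext x i
  simp only [tensorI, Finset.sum_apply]
  rw [← Finset.sum_apply x, ← map_sum, Finset.sum_fn]

theorem tensorI_mulVec (K : Matrix (Fin n) (Fin n) ℂ) (g : X → Fin n → ℂ) :
    tensorI T (fun z => K *ᵥ g z) = fun x => K *ᵥ tensorI T g x := by
  funext x i
  have : (fun z => (K *ᵥ g z) i) = ∑ j, K i j • fun z => g z j := by
    funext z
    simp [Matrix.mulVec, dotProduct]
  change T (fun z => (K *ᵥ g z) i) x = _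
  rw [this, map_sum]
  simp [tensorI, Matrix.mulVec, dotProduct]

theorem tensorI_sum_smul_mulVec {ι : Type*} (s : Finset ι) (c : ι → ℂ)
    (K : ι → Matrix (Fin n) (Fin n) ℂ) (g : ι → X → Fin n → ℂ) (x : X) :
    tensorI T (fun z => ∑ b ∈ s, c b • K b *ᵥ g b z) x =
      ∑ b ∈ s, c b • K b *ᵥ tensorI T (g b) x := by
  simp only [← Matrix.smul_mulVec, tensorI_sum, Finset.sum_apply, tensorI_mulVec]

end TensorI

theorem decoupling_identity_general {d n : ℕ}
    (T : ((Fin d → ℝ) → ℂ) →ₗ[ℂ] ((Fin d → ℝ) → ℂ))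
    (B : ℕ → (Fin d → ℝ) → Matrix (Fin n) (Fin n) ℂ)
    (θ : Finset ℕ)
    (Mc : ℕ → Matrix (Fin n) (Fin n) ℂ)
    (f : (Fin d → ℝ) → Fin n → ℂ) (x y : Fin d → ℝ) :
    ((-1 : ℂ) ^ θ.card) •
        ∑ σ ∈ θ.powerset, ((-1 : ℂ) ^ (θ.card - σ.card)) •
          (prodRev (fun i => B i x) σ).mulVec
            (tensorI T (fun z => (prodFwd (fun i => B i z) (θ \ σ)).mulVec (f z)) y) =
      ∑ σ ∈ θ.powerset,
        (∑ α ∈ σ.powerset, ((-1 : ℂ) ^ (θ.card - α.card)) •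
            (prodRev (fun i => B i x) α * prodFwd Mc (σ \ α))).mulVec
          (tensorI T
            (fun z => ∑ β ∈ (θ \ σ).powerset, ((-1 : ℂ) ^ (θ.card - β.card)) •
              ((prodRev Mc β * prodFwd (fun i => B i z) ((θ \ σ) \ β)).mulVec (f z))) y) := by
  set N : Finset ℕ → Matrix (Fin n) (Fin n) ℂ :=
    fun s => (-1 : ℂ) ^ s.card • prodRev (fun i => B i x) s
  set Q : Finset ℕ → Matrix (Fin n) (Fin n) ℂ := fun s => (-1 : ℂ) ^ s.card • prodRev Mc s
  set t : Finset ℕ → Fin n → ℂ :=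
    fun s => tensorI T (fun z => prodFwd (fun i => B i z) s *ᵥ f z) y
  have hsq : (-1 : ℂ) ^ θ.card * (-1) ^ θ.card = 1 := by
    rw [← pow_add, ← two_mul, pow_mul, neg_one_sq, one_pow]
  simp only [← Matrix.mulVec_mulVec, tensorI_sum_smul_mulVec]
  rw [sum_powerset_neg_one_pow_card_sub_smul subset_rfl, smul_smul, hsq, one_smul]
  calc _ = subsetConv N t θ := by simp only [subsetConv, N, t, smul_assoc, Matrix.smul_eq_mulVec]
    _ = subsetConv (subsetConv N (prodFwd Mc)) (subsetConv Q t) θ := by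
      rw [subsetConv_assoc, ← subsetConv_assoc (prodFwd Mc),
        subsetConv_prodFwd_neg_one_pow_smul_prodRev, single_empty_one_subsetConv]
    _ = _ := by
      refine sum_congr rfl fun σ hσ => ?_
      rw [sum_powerset_neg_one_pow_card_sub_smul (mem_powerset.1 hσ),
        sum_powerset_neg_one_pow_card_sub_smul sdiff_subset, Matrix.smul_mulVec,
        Matrix.mulVec_smul, smul_smul, hsq, one_smul]
      simp only [subsetConv, N, Q, t, smul_assoc, Matrix.smul_eq_mulVec, smul_eq_mul,
        Matrix.smul_mul]

/-- mean-value decoupling of iterated commutator differences.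
For a tuple `θ ∈ C(m)`, locally integrable matrix symbols `B₁, …, B_m`, a linear scalar
operator `T`, and the tuple `Mc` of entrywise averages of the symbols over a cube `Q`,
`(−1)^{|θ|} ∑_{σ≤θ} (−1)^{|θ|−|σ|} B⃗_σ(x) (T⊗I_n)(B⃗_{(θ−σ)^t} f)(y)`
equals the decoupled double sum. -/
theorem decoupling_identity {d n m : ℕ}
    (T : ((Fin d → ℝ) → ℂ) →ₗ[ℂ] ((Fin d → ℝ) → ℂ))
    (B : ℕ → (Fin d → ℝ) → Matrix (Fin n) (Fin n) ℂ)
    (hB : ∀ i k l, LocallyIntegrable (fun x => B i x k l) volume)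
    (θ : Finset ℕ) (hθ : θ ⊆ Finset.Icc 1 m)
    (a : Fin d → ℝ) (h : ℝ) (hh : 0 < h)
    (Mc : ℕ → Matrix (Fin n) (Fin n) ℂ)
    (hMc : ∀ i k l, Mc i k l = ⨍ y in cube a h, B i y k l)
    (f : (Fin d → ℝ) → Fin n → ℂ) (x y : Fin d → ℝ) :
    ((-1 : ℂ) ^ θ.card) •
        ∑ σ ∈ θ.powerset, ((-1 : ℂ) ^ (θ.card - σ.card)) •
          (prodRev (fun i => B i x) σ).mulVec
            (tensorI T (fun z => (prodFwd (fun i => B i z) (θ \ σ)).mulVec (f z)) y) =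
      ∑ σ ∈ θ.powerset,
        (∑ α ∈ σ.powerset, ((-1 : ℂ) ^ (θ.card - α.card)) •
            (prodRev (fun i => B i x) α * prodFwd Mc (σ \ α))).mulVec
          (tensorI T
            (fun z => ∑ β ∈ (θ \ σ).powerset, ((-1 : ℂ) ^ (θ.card - β.card)) •
              ((prodRev Mc β * prodFwd (fun i => B i z) ((θ \ σ) \ β)).mulVec (f z))) y) :=
  decoupling_identity_general T B θ Mc f x y
end
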